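/- Let G be a compact topological group with Haar measure μ normalized so that μ(G) = 1, let K be a countable subgroup of the center of G regarded as a discrete group, let n ≥ 1, and let π : G → GL(n,ℂ) be a continuous unitary representation (all matrices π(g) are unitary) with matrix coefficients π_{ij}(g) = (π(g))_{ij}. Then for all κ₁, κ₂, λ₁, λ₂ ∈ K, all continuous functions u, v : G → ℂ, and all indices 1 ≤ i, k ≤ n, one has ∑_{j=1}^{n} (u^{κ₁} ∘* π_{ij}^{λ₁}) •* (v^{κ₂} ∘* π_{jk}^{λ₂}) = ∑_{j=1}^{n} (u^{κ₁} •* v^{κ₂}) ∘* (π_{ij}^{λ₁} •* π_{jk}^{λ₂}). -/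

import Mathlib

open MeasureTheory
open scoped Classical

/-- Convolution of complex-valued functions on a group with respect to a measure `μ`:
`(u * v)(g) = ∫_G u(h) v(h⁻¹g) dμ(h)`. -/
noncomputable def conv {G : Type*} [Group G] [MeasurableSpace G] (μ : Measure G)
    (u v : G → ℂ) : G → ℂ :=
  fun g => ∫ h, u h * v (h⁻¹ * g) ∂μ

/-- Left translation of a function: `(L_κ f)(x) = f(κx)`. -/
def lTrans {G : Type*} [Group G] (κ : G) (f : G → ℂ) : G → ℂ := fun x => f (κ * x)

/-- The function `u^κ : K × G → ℂ`, `u^κ(x,y) = u(y)` if `x = κ` and `0` otherwise. -/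
noncomputable def lvl {G : Type*} [Group G] (K : Subgroup G) (κ : K) (u : G → ℂ) : K × G → ℂ :=
  fun p => if p.1 = κ then u p.2 else 0

/-- Horizontal convolution on `K × G` (from the product group structure):
`(f •* g)(x,y) = ∑_{ℓ∈K} ∫_G f(ℓ,h) g(ℓ⁻¹x, h⁻¹y) dμ(h)`. -/
noncomputable def hconvK {G : Type*} [Group G] [MeasurableSpace G] (μ : Measure G)
    (K : Subgroup G) (f g : K × G → ℂ) : K × G → ℂ :=
  fun p => ∑' ℓ : K, ∫ h, f (ℓ, h) * g (ℓ⁻¹ * p.1, h⁻¹ * p.2) ∂μ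

/-- Vertical convolution on `K ⋉ G` (from the action groupoid structure):
`(f ∘* g)(x,y) = ∑_{ℓ∈K} f(ℓ, ℓ⁻¹xy) g(ℓ⁻¹x, y)`. -/
noncomputable def vconvK {G : Type*} [Group G] (K : Subgroup G)
    (f g : K × G → ℂ) : K × G → ℂ :=
  fun p => ∑' ℓ : K, f (ℓ, ((ℓ⁻¹ * p.1 : K) : G) * p.2) * g (ℓ⁻¹ * p.1, p.2)

lemma vconv_lvl {G : Type*} [Group G] (K : Subgroup G) (κ lam : K) (u f : G → ℂ) :
    vconvK K (lvl K κ u) (lvl K lam f)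
      = lvl K (κ * lam) (fun y => u ((lam : G) * y) * f y) := by
  funext p
  simp only [vconvK, lvl]
  rw [tsum_eq_single κ]
  · by_cases h : p.1 = κ * lam
    · have h1 : κ⁻¹ * p.1 = lam := by rw [h, inv_mul_cancel_left]
      simp [h1, h]
    · have h1 : κ⁻¹ * p.1 ≠ lam := by
        intro hc; exact h (by rw [← hc, mul_inv_cancel_left])
      simp [h1, h]
  · intro ℓ hℓ
    simp [hℓ]

lemma hconv_lvl {G : Type*} [Group G] [MeasurableSpace G] (μ : Measure G)
    (K : Subgroup G) (κ lam : K) (u v : G → ℂ) :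
    hconvK μ K (lvl K κ u) (lvl K lam v) = lvl K (κ * lam) (conv μ u v) := by
  funext p
  simp only [hconvK, lvl, conv]
  rw [tsum_eq_single κ]
  · by_cases h : p.1 = κ * lam
    · have h1 : κ⁻¹ * p.1 = lam := by rw [h, inv_mul_cancel_left]
      simp [h1, h]
    · have h1 : κ⁻¹ * p.1 ≠ lam := by
        intro hc; exact h (by rw [← hc, mul_inv_cancel_left])
      simp [h1, h]
  · intro ℓ hℓ
    simp [hℓ]

/-- **Weak compatibility for compact singular Lie groups.** For a compact group `G` with
normalized Haar measure `μ`, a countable subgroup `K` of the center of `G`, an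
`n`-dimensional continuous unitary representation `π` of `G`, `κ₁, κ₂, λ₁, λ₂ ∈ K`,
continuous `u, v : G → ℂ` and indices `i, k`:
`∑_{j=1}^{n} (u^{κ₁} ∘* π_{ij}^{λ₁}) •* (v^{κ₂} ∘* π_{jk}^{λ₂})
  = ∑_{j=1}^{n} (u^{κ₁} •* v^{κ₂}) ∘* (π_{ij}^{λ₁} •* π_{jk}^{λ₂})`. -/
theorem weak_compatibility_singular {G : Type*} [Group G] [TopologicalSpace G]
    [IsTopologicalGroup G] [CompactSpace G] [MeasurableSpace G] [BorelSpace G]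
    (μ : Measure G) [μ.IsHaarMeasure] [IsProbabilityMeasure μ]
    (K : Subgroup G) (hK : K ≤ Subgroup.center G) (hKcount : (K : Set G).Countable)
    (n : ℕ) (hn : 1 ≤ n) (π : G →* Matrix.GeneralLinearGroup (Fin n) ℂ)
    (hπ : Continuous fun g => ((π g : Matrix (Fin n) (Fin n) ℂ)))
    (hunitary : ∀ g : G, (π g : Matrix (Fin n) (Fin n) ℂ) ∈ Matrix.unitaryGroup (Fin n) ℂ)
    (κ₁ κ₂ lam₁ lam₂ : K) (u v : G → ℂ) (hu : Continuous u) (hv : Continuous v)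
    (i k : Fin n) :
    ∑ j : Fin n,
        hconvK μ K
          (vconvK K (lvl K κ₁ u)
            (lvl K lam₁ fun g => (π g : Matrix (Fin n) (Fin n) ℂ) i j))
          (vconvK K (lvl K κ₂ v)
            (lvl K lam₂ fun g => (π g : Matrix (Fin n) (Fin n) ℂ) j k)) =
      ∑ j : Fin n,
        vconvK K (hconvK μ K (lvl K κ₁ u) (lvl K κ₂ v))
          (hconvK μ K
            (lvl K lam₁ fun g => (π g : Matrix (Fin n) (Fin n) ℂ) i j)
            (lvl K lam₂ fun g => (π g : Matrix (Fin n) (Fin n) ℂ) j k)) := by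
  classical
  set πc : Fin n → Fin n → G → ℂ :=
    fun a b g => (π g : Matrix (Fin n) (Fin n) ℂ) a b with hπc
  have hπcont : ∀ a b, Continuous (πc a b) :=
    fun a b => (continuous_apply b).comp ((continuous_apply a).comp hπ)
  have hint : ∀ f : G → ℂ, Continuous f → Integrable f μ :=
    fun f hf => hf.integrable_of_hasCompactSupport (HasCompactSupport.of_compactSpace f)
  have hcen : ∀ (a : K) (g : G), g * (a : G) = (a : G) * g :=
    fun a g => Subgroup.mem_center_iff.mp (hK a.2) g
  have h12 : lam₁ * κ₂ = κ₂ * lam₁ := Subtype.ext (hcen lam₁ (κ₂ : G)).symm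
  have hlev : κ₁ * lam₁ * (κ₂ * lam₂) = κ₁ * κ₂ * (lam₁ * lam₂) := by
    simp only [mul_assoc]
    rw [← mul_assoc lam₁, h12, mul_assoc]
  have hmat : ∀ (a c : Fin n) (g g' : G),
      ∑ j : Fin n, πc a j g * πc j c g' = πc a c (g * g') := by
    intro a c g g'
    have hmul : (π (g * g') : Matrix (Fin n) (Fin n) ℂ)
        = (π g : Matrix (Fin n) (Fin n) ℂ) * (π g' : Matrix (Fin n) (Fin n) ℂ) := by
      rw [map_mul]; rfl
    simp [hπc, hmul, Matrix.mul_apply]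
  simp only [vconv_lvl, hconv_lvl, hlev]
  funext p
  simp only [Finset.sum_apply]
  by_cases hp : p.1 = κ₁ * κ₂ * (lam₁ * lam₂)
  · simp only [lvl, if_pos hp]
    set y := p.2
    -- key integral identity
    have hinv : (∫ h, u ((lam₁ : G) * h) * v ((lam₂ : G) * (h⁻¹ * y)) ∂μ)
        = conv μ u v (((lam₁ * lam₂ : K) : G) * y) := by
      have hti := MeasureTheory.integral_mul_left_eq_self (μ := μ)
        (fun h => u h * v (h⁻¹ * (((lam₁ * lam₂ : K) : G) * y))) ((lam₁ : G))
      rw [conv, ← hti]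
      refine integral_congr_ae (Filter.Eventually.of_forall fun h => ?_)
      dsimp only
      have hg : (lam₂ : G) * (h⁻¹ * y) = ((lam₁ : G) * h)⁻¹ * (((lam₁ * lam₂ : K) : G) * y) := by
        calc (lam₂ : G) * (h⁻¹ * y) = ((lam₂ : G) * h⁻¹) * y := by rw [mul_assoc]
          _ = (h⁻¹ * (lam₂ : G)) * y := by rw [← hcen lam₂ h⁻¹]
          _ = h⁻¹ * ((lam₂ : G) * y) := by rw [mul_assoc]
          _ = ((lam₁ : G) * h)⁻¹ * (((lam₁ * lam₂ : K) : G) * y) := by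
              rw [Subgroup.coe_mul, mul_inv_rev, mul_assoc h⁻¹, mul_assoc ((lam₁:G)),
                inv_mul_cancel_left]
      rw [hg]
    have hLHS : ∀ j : Fin n,
        conv μ (fun z => u ((lam₁ : G) * z) * πc i j z)
          (fun z => v ((lam₂ : G) * z) * πc j k z) y
        = ∫ h, (u ((lam₁ : G) * h) * πc i j h)
            * (v ((lam₂ : G) * (h⁻¹ * y)) * πc j k (h⁻¹ * y)) ∂μ := fun j => rfl
    calc ∑ j : Fin n, conv μ (fun z => u ((lam₁ : G) * z) * πc i j z)
          (fun z => v ((lam₂ : G) * z) * πc j k z) y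
        = ∫ h, ∑ j : Fin n, (u ((lam₁ : G) * h) * πc i j h)
            * (v ((lam₂ : G) * (h⁻¹ * y)) * πc j k (h⁻¹ * y)) ∂μ := by
          simp only [hLHS]
          rw [← integral_finset_sum]
          intro j _
          refine hint _ ?_
          fun_prop
      _ = ∫ h, (u ((lam₁ : G) * h) * v ((lam₂ : G) * (h⁻¹ * y))) * πc i k y ∂μ := by
          refine integral_congr_ae (Filter.Eventually.of_forall fun h => ?_)
          dsimp only
          have := hmat i k h (h⁻¹ * y)
          rw [mul_inv_cancel_left] at this
          rw [← this, Finset.mul_sum]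
          exact Finset.sum_congr rfl fun j _ => by ring
      _ = (∫ h, u ((lam₁ : G) * h) * v ((lam₂ : G) * (h⁻¹ * y)) ∂μ) * πc i k y := by
          rw [integral_mul_const]
      _ = conv μ u v (((lam₁ * lam₂ : K) : G) * y) * πc i k y := by rw [hinv]
      _ = ∑ j : Fin n, conv μ u v (((lam₁ * lam₂ : K) : G) * y)
            * conv μ (πc i j) (πc j k) y := by
          rw [← Finset.mul_sum]
          congr 1
          have : ∀ j : Fin n, conv μ (πc i j) (πc j k) y
              = ∫ h, πc i j h * πc j k (h⁻¹ * y) ∂μ := fun j => rfl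
          simp only [this]
          rw [← integral_finset_sum]
          · have : ∀ h : G, ∑ j : Fin n, πc i j h * πc j k (h⁻¹ * y) = πc i k y := by
              intro h
              have := hmat i k h (h⁻¹ * y)
              rwa [mul_inv_cancel_left] at this
            simp only [this]
            simp [integral_const, measure_univ]
          · intro j _
            refine hint _ ?_
            fun_prop
  · simp only [lvl, if_neg hp]
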